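/- arXiv:1907.09099 — 2 statements merged into one kernel-verified Lean document; each statement's English description precedes it below -/
import Mathlib

section
/- Let K be a consistent and deductively closed set of propositional formulas, let {Φ_C, Φ_A, Φ_R} be a credibility partition of the set Φ of all formulas, and let B°_K : Φ → 2^Φ be a belief revision function based on K. Then the following are equivalent: (A) B°_K is a filtered belief revision function; (B) there exists a basic AGM belief revision function B*_K : Φ → 2^Φ such that for all φ ∈ Φ: B°_K(φ) = K if φ ∈ Φ_R, B°_K(φ) = B*_K(φ) if φ ∈ Φ_C, and B°_K(φ) = K ∩ B*_K(φ) if φ ∈ Φ_A. -/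
/-! Propositional language built from a set of atomic formulas via negation and disjunction. -/

inductive PropForm (α : Type) : Type
  | atom : α → PropForm α
  | neg : PropForm α → PropForm α
  | or : PropForm α → PropForm α → PropForm α

namespace PropForm

/-- Truth value of a formula under a boolean valuation of the atoms. -/
def eval (v : α → Bool) : PropForm α → Bool
  | atom a => v a
  | neg φ => !(eval v φ)
  | or φ ψ => (eval v φ) || (eval v ψ)

/-- Conjunction, defined from negation and disjunction. -/
def and (φ ψ : PropForm α) : PropForm α := neg (or (neg φ) (neg ψ))

/-- Material implication. -/
def imp (φ ψ : PropForm α) : PropForm α := or (neg φ) ψ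

/-- Biconditional. -/
def biimp (φ ψ : PropForm α) : PropForm α := and (imp φ ψ) (imp ψ φ)

/-- A formula is a tautology if it is true under every boolean valuation. -/
def Tautology (φ : PropForm α) : Prop := ∀ v : α → Bool, eval v φ = true

/-- A formula is a contradiction if it is false under every boolean valuation. -/
def Contradiction (φ : PropForm α) : Prop := ∀ v : α → Bool, eval v φ = false

end PropForm

open PropForm

/-- The PL-deductive closure of `F`: ψ ∈ [F]^PL iff there are φ₁,…,φₙ ∈ F (n ≥ 0) such that
(φ₁ ∧ … ∧ φₙ) → ψ is a tautology (stated via the equivalent curried implication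
φ₁ → (φ₂ → ⋯ → ψ)). -/
def Cn (F : Set (PropForm α)) : Set (PropForm α) :=
  {ψ | ∃ l : List (PropForm α), (∀ φ ∈ l, φ ∈ F) ∧ Tautology (l.foldr PropForm.imp ψ)}

/-- A set of formulas is consistent if its deductive closure is not the set of all formulas. -/
def ConsistentSet (F : Set (PropForm α)) : Prop := Cn F ≠ Set.univ

/-- A set of formulas is deductively closed if it equals its own deductive closure. -/
def DedClosed (F : Set (PropForm α)) : Prop := F = Cn F

/-- A credibility partition of the set of formulas into credible (ΦC), allowable (ΦA) and
rejected (ΦR) formulas. -/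
structure CredPartition (ΦC ΦA ΦR : Set (PropForm α)) : Prop where
  disjCA : Disjoint ΦC ΦA
  disjCR : Disjoint ΦC ΦR
  disjAR : Disjoint ΦA ΦR
  cover : ΦC ∪ ΦA ∪ ΦR = Set.univ
  taut_mem_C : ∀ φ : PropForm α, Tautology φ → φ ∈ ΦC
  C_consistent : ∀ φ ∈ ΦC, ¬ Contradiction φ
  C_equiv_closed : ∀ φ ψ : PropForm α, Tautology (φ.biimp ψ) → φ ∈ ΦC → ψ ∈ ΦC
  A_consistent : ∀ φ ∈ ΦA, ¬ Contradiction φ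
  A_equiv_closed : ∀ φ ψ : PropForm α, Tautology (φ.biimp ψ) → φ ∈ ΦA → ψ ∈ ΦA
  contra_mem_R : ∀ φ : PropForm α, Contradiction φ → φ ∈ ΦR

/-- Basic AGM belief revision function based on K: postulates AGM1–AGM6. -/
structure IsBasicAGM (K : Set (PropForm α)) (B : PropForm α → Set (PropForm α)) : Prop where
  agm1 : ∀ φ : PropForm α, B φ = Cn (B φ)
  agm2 : ∀ φ : PropForm α, φ ∈ B φ
  agm3 : ∀ φ : PropForm α, B φ ⊆ Cn (K ∪ {φ})
  agm4 : ∀ φ : PropForm α, φ.neg ∉ K → Cn (K ∪ {φ}) ⊆ B φ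
  agm5 : ∀ φ : PropForm α, B φ = Set.univ ↔ Contradiction φ
  agm6 : ∀ φ ψ : PropForm α, Tautology (φ.biimp ψ) → B φ = B ψ

/-- Filtered belief revision function based on K, relative to a credibility partition. -/
structure IsFiltered (ΦC ΦA ΦR K : Set (PropForm α))
    (B : PropForm α → Set (PropForm α)) : Prop where
  f1 : ∀ φ ∈ ΦR, B φ = K
  f2a : ∀ φ : PropForm α, φ.neg ∉ K → φ ∈ ΦC → B φ = Cn (K ∪ {φ})
  f2b : ∀ φ : PropForm α, φ.neg ∉ K → φ ∈ ΦA → B φ = K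
  f3 : ∀ φ : PropForm α, φ.neg ∈ K → ConsistentSet (B φ) ∧ DedClosed (B φ)
  f3a : ∀ φ : PropForm α, φ.neg ∈ K → φ ∈ ΦC → φ ∈ B φ
  f3b : ∀ φ : PropForm α, φ.neg ∈ K → φ ∈ ΦA →
    B φ ⊆ K \ {φ.neg} ∧ Cn (B φ ∪ {φ.neg}) = K
  f4 : ∀ φ ψ : PropForm α, Tautology (φ.biimp ψ) → B φ = B ψ

/-!
A filtered revision acts on `φ ∈ ΦC` as an AGM revision and on `φ ∈ ΦA` as a contraction of `K`
by `¬φ`. Hence a basic AGM revision `Bs` is rebuilt from `Bo` by the Levi identity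
`Bs φ = Cn (Bo φ ∪ {φ})` on `ΦA` (on `ΦR`, where `Bo` carries no information, `Bs` is full meet
revision), and the recovery postulate `Cn (Bo φ ∪ {¬φ}) = K` together with `Cn (S ∪ {φ}) ∩ Cn (S ∪ {¬φ}) = Cn S` gives back
`Bo φ = K ∩ Bs φ`. Conversely `K ∩ Bs φ` is the Harper contraction of `K` by `¬φ`; it satisfies
recovery because `φ ∨ x ∈ K ∩ Bs φ` for every `x ∈ K`.
-/

namespace PropForm

variable {α : Type}

@[simp] lemma eval_neg (v : α → Bool) (φ : PropForm α) : eval v φ.neg = !eval v φ := rfl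

@[simp] lemma eval_or (v : α → Bool) (φ ψ : PropForm α) :
    eval v (φ.or ψ) = (eval v φ || eval v ψ) := rfl

@[simp] lemma eval_imp (v : α → Bool) (φ ψ : PropForm α) :
    eval v (φ.imp ψ) = (!eval v φ || eval v ψ) := rfl

lemma eval_foldr_imp (v : α → Bool) (l : List (PropForm α)) (ψ : PropForm α) :
    eval v (l.foldr imp ψ) = true ↔ ((∀ χ ∈ l, eval v χ = true) → eval v ψ = true) := by
  induction l with
  | nil => simp
  | cons χ l ih => cases h : eval v χ <;> simp [ih, h]

lemma tautology_biimp_iff {φ ψ : PropForm α} :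
    Tautology (φ.biimp ψ) ↔ ∀ v, eval v φ = eval v ψ := by
  refine forall_congr' fun v => ?_
  simp only [biimp, PropForm.and, eval_imp, eval_neg, eval_or]
  cases eval v φ <;> cases eval v ψ <;> simp

lemma tautology_biimp_comm {φ ψ : PropForm α} :
    Tautology (φ.biimp ψ) ↔ Tautology (ψ.biimp φ) := by
  simp only [tautology_biimp_iff, eq_comm]

end PropForm

section Closure

variable {α : Type} {F G K B : Set (PropForm α)} {φ ψ : PropForm α}

lemma mem_Cn_iff : ψ ∈ Cn F ↔ ∃ l : List (PropForm α), (∀ χ ∈ l, χ ∈ F) ∧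
    ∀ v, (∀ χ ∈ l, eval v χ = true) → eval v ψ = true := by
  simp only [Cn, Tautology, Set.mem_ofPred_eq, eval_foldr_imp]

lemma exists_list_entails_of_subset_Cn (l : List (PropForm α)) (hl : ∀ χ ∈ l, χ ∈ Cn F) :
    ∃ L : List (PropForm α), (∀ χ ∈ L, χ ∈ F) ∧
      ∀ v, (∀ χ ∈ L, eval v χ = true) → ∀ χ ∈ l, eval v χ = true := by
  induction l with
  | nil => exact ⟨[], by simp, by simp⟩
  | cons χ l ih =>
    obtain ⟨L, hLF, hL⟩ := ih fun θ hθ => hl θ (List.mem_cons_of_mem χ hθ)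
    obtain ⟨M, hMF, hM⟩ := mem_Cn_iff.mp (hl χ List.mem_cons_self)
    refine ⟨M ++ L, ?_, fun v hv => ?_⟩
    · simpa only [List.mem_append, or_imp, forall_and] using ⟨hMF, hLF⟩
    · simp only [List.mem_append, or_imp, forall_and] at hv
      simpa only [List.mem_cons, forall_eq_or_imp] using ⟨hM v hv.1, hL v hv.2⟩

lemma mem_Cn_of_entails (l : List (PropForm α)) (hl : ∀ χ ∈ l, χ ∈ Cn F)
    (hψ : ∀ v, (∀ χ ∈ l, eval v χ = true) → eval v ψ = true) : ψ ∈ Cn F := by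
  obtain ⟨L, hLF, hL⟩ := exists_list_entails_of_subset_Cn l hl
  exact mem_Cn_iff.mpr ⟨L, hLF, fun v hv => hψ v (hL v hv)⟩

lemma mem_Cn_of_mem_of_entails (hφ : φ ∈ Cn F) (h : ∀ v, eval v φ = true → eval v ψ = true) :
    ψ ∈ Cn F :=
  mem_Cn_of_entails [φ] (by simpa using hφ) (by simpa using h)

lemma mem_Cn_of_mem_of_mem_of_entails {χ : PropForm α} (hφ : φ ∈ Cn F) (hψ : ψ ∈ Cn F)
    (h : ∀ v, eval v φ = true → eval v ψ = true → eval v χ = true) : χ ∈ Cn F :=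
  mem_Cn_of_entails [φ, ψ] (by simpa using ⟨hφ, hψ⟩) fun v hv => by simp_all

lemma mem_Cn_of_tautology (h : Tautology ψ) : ψ ∈ Cn F :=
  mem_Cn_of_entails [] (by simp) fun v _ => h v

lemma subset_Cn : F ⊆ Cn F :=
  fun φ hφ => mem_Cn_iff.mpr ⟨[φ], by simpa using hφ, by simp⟩

lemma Cn_subset_Cn (h : G ⊆ Cn F) : Cn G ⊆ Cn F := fun ψ hψ => by
  obtain ⟨l, hlG, hl⟩ := mem_Cn_iff.mp hψ
  exact mem_Cn_of_entails l (fun χ hχ => h (hlG χ hχ)) hl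

lemma Cn_mono (h : F ⊆ G) : Cn F ⊆ Cn G :=
  Cn_subset_Cn (h.trans subset_Cn)

lemma dedClosed_Cn : DedClosed (Cn F) :=
  subset_Cn.antisymm (Cn_subset_Cn subset_rfl)

lemma Cn_univ : Cn (Set.univ : Set (PropForm α)) = Set.univ :=
  Set.eq_univ_of_univ_subset subset_Cn

lemma Cn_eq_univ_of_mem_of_neg_mem (h : φ ∈ Cn F) (hn : φ.neg ∈ Cn F) : Cn F = Set.univ :=
  Set.eq_univ_of_forall fun _ => mem_Cn_of_mem_of_mem_of_entails h hn fun v => by simp_all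

lemma mem_Cn_union_singleton_iff : ψ ∈ Cn (F ∪ {φ}) ↔ φ.imp ψ ∈ Cn F := by
  constructor
  · intro h
    obtain ⟨l, hl, hψ⟩ := mem_Cn_iff.mp h
    refine mem_Cn_of_entails (l.map φ.imp) ?_ fun v hv => ?_
    · simp only [List.mem_map]
      rintro _ ⟨χ, hχ, rfl⟩
      rcases hl χ hχ with hχF | rfl
      · exact mem_Cn_of_mem_of_entails (subset_Cn hχF) (by simp_all)
      · exact mem_Cn_of_tautology fun v => by simp
    · cases hφ : eval v φ
      · simp [hφ]
      · simpa [hφ] using hψ v fun χ hχ => by simpa [hφ] using hv _ (List.mem_map_of_mem hχ)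
  · intro h
    refine mem_Cn_of_mem_of_mem_of_entails (Cn_mono Set.subset_union_left h)
      (subset_Cn (Set.mem_union_right F rfl)) fun v => ?_
    cases hφ : eval v φ <;> simp [hφ]

lemma Cn_union_singleton_inter_Cn_union_neg : Cn (F ∪ {φ}) ∩ Cn (F ∪ {φ.neg}) = Cn F := by
  refine Set.Subset.antisymm (fun ψ ⟨hpos, hneg⟩ => ?_)
    (Set.subset_inter (Cn_mono Set.subset_union_left) (Cn_mono Set.subset_union_left))
  rw [mem_Cn_union_singleton_iff] at hpos hneg
  refine mem_Cn_of_mem_of_mem_of_entails hpos hneg fun v => ?_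
  cases hφ : eval v φ <;> simp [hφ]

lemma Cn_union_singleton_eq_univ_iff : Cn (F ∪ {φ}) = Set.univ ↔ φ.neg ∈ Cn F := by
  constructor
  · intro h
    have : φ.imp φ.neg ∈ Cn F := mem_Cn_union_singleton_iff.mp (h ▸ Set.mem_univ _)
    exact mem_Cn_of_mem_of_entails this fun v => by cases hφ : eval v φ <;> simp [hφ]
  · intro hn
    exact Cn_eq_univ_of_mem_of_neg_mem (subset_Cn (Set.mem_union_right F rfl))
      (Cn_mono Set.subset_union_left hn)

lemma Cn_singleton_eq_univ_iff : Cn ({φ} : Set (PropForm α)) = Set.univ ↔ Contradiction φ := by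
  constructor
  · intro h v
    obtain ⟨l, hl, hn⟩ := mem_Cn_iff.mp (h ▸ Set.mem_univ φ.neg)
    by_contra hv
    replace hv : eval v φ = true := by simpa using hv
    simpa [hv] using hn v fun χ hχ => (hl χ hχ) ▸ hv
  · intro h
    exact Set.eq_univ_of_forall fun _ =>
      mem_Cn_of_mem_of_entails (subset_Cn (Set.mem_singleton φ)) fun v hv => by simp [h v] at hv

lemma Cn_union_singleton_congr (h : ∀ v, eval v φ = eval v ψ) :
    Cn (F ∪ {φ}) = Cn (F ∪ {ψ}) := by
  have key : ∀ {φ ψ : PropForm α}, (∀ v, eval v φ = eval v ψ) → Cn (F ∪ {φ}) ⊆ Cn (F ∪ {ψ}) :=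
    fun h => Cn_subset_Cn <| Set.union_subset (Set.subset_union_left.trans subset_Cn) <|
      Set.singleton_subset_iff.mpr <|
        mem_Cn_of_mem_of_entails (subset_Cn (Set.mem_union_right F rfl)) fun v hv => (h v).symm ▸ hv
  exact (key h).antisymm (key fun v => (h v).symm)

lemma Cn_singleton_congr (h : ∀ v, eval v φ = eval v ψ) :
    Cn ({φ} : Set (PropForm α)) = Cn {ψ} := by
  simpa using Cn_union_singleton_congr (F := ∅) h

lemma ConsistentSet.ne_univ (h : ConsistentSet F) : F ≠ Set.univ :=
  fun hF => h (by rw [hF, Cn_univ])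

lemma ConsistentSet.anti (h : ConsistentSet G) (hFG : F ⊆ G) : ConsistentSet F :=
  fun hF => h (Set.eq_univ_of_univ_subset (hF ▸ Cn_mono hFG))

lemma DedClosed.mem_of_mem_of_entails (hF : DedClosed F) (hφ : φ ∈ F)
    (h : ∀ v, eval v φ = true → eval v ψ = true) : ψ ∈ F :=
  hF ▸ mem_Cn_of_mem_of_entails (subset_Cn hφ) h

lemma DedClosed.mem_congr (hF : DedClosed F) (h : ∀ v, eval v φ = eval v ψ) : φ ∈ F ↔ ψ ∈ F :=
  ⟨fun hφ => hF.mem_of_mem_of_entails hφ fun v => (h v) ▸ id,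
    fun hψ => hF.mem_of_mem_of_entails hψ fun v => (h v).symm ▸ id⟩

lemma DedClosed.inter (hF : DedClosed F) (hG : DedClosed G) : DedClosed (F ∩ G) :=
  subset_Cn.antisymm <| Set.subset_inter
    ((Cn_mono Set.inter_subset_left).trans hF.symm.subset)
    ((Cn_mono Set.inter_subset_right).trans hG.symm.subset)

lemma Cn_inter_union_neg_eq (hK : DedClosed K) (hB : DedClosed B) (hφ : φ ∈ B)
    (hn : φ.neg ∈ K) : Cn ((K ∩ B) ∪ {φ.neg}) = K := by
  refine ((Cn_mono (Set.union_subset Set.inter_subset_left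
    (Set.singleton_subset_iff.mpr hn))).trans hK.symm.subset).antisymm fun x hx => ?_
  have hor : φ.or x ∈ K ∩ B :=
    ⟨hK.mem_of_mem_of_entails hx (by simp_all), hB.mem_of_mem_of_entails hφ (by simp_all)⟩
  refine mem_Cn_of_mem_of_mem_of_entails (subset_Cn (Set.mem_union_left _ hor))
    (subset_Cn (Set.mem_union_right _ rfl)) fun v => ?_
  cases hφ : eval v φ <;> simp [hφ]

end Closure

namespace CredPartition

variable {α : Type} {ΦC ΦA ΦR : Set (PropForm α)} {φ ψ : PropForm α}

lemma mem_or (hpart : CredPartition ΦC ΦA ΦR) (φ : PropForm α) :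
    φ ∈ ΦC ∨ φ ∈ ΦA ∨ φ ∈ ΦR := by
  have : φ ∈ ΦC ∪ ΦA ∪ ΦR := hpart.cover ▸ Set.mem_univ φ
  rcases this with (h | h) | h <;> simp [h]

lemma mem_R_iff (hpart : CredPartition ΦC ΦA ΦR) : φ ∈ ΦR ↔ φ ∉ ΦC ∧ φ ∉ ΦA := by
  refine ⟨fun hR => ⟨fun hC => hpart.disjCR.notMem_of_mem_left hC hR,
    fun hA => hpart.disjAR.notMem_of_mem_left hA hR⟩, fun ⟨hC, hA⟩ => ?_⟩
  simpa [hC, hA] using hpart.mem_or φ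

lemma mem_C_congr (hpart : CredPartition ΦC ΦA ΦR) (h : Tautology (φ.biimp ψ)) :
    φ ∈ ΦC ↔ ψ ∈ ΦC :=
  ⟨hpart.C_equiv_closed φ ψ h, hpart.C_equiv_closed ψ φ (tautology_biimp_comm.mp h)⟩

lemma mem_A_congr (hpart : CredPartition ΦC ΦA ΦR) (h : Tautology (φ.biimp ψ)) :
    φ ∈ ΦA ↔ ψ ∈ ΦA :=
  ⟨hpart.A_equiv_closed φ ψ h, hpart.A_equiv_closed ψ φ (tautology_biimp_comm.mp h)⟩

lemma mem_R_congr (hpart : CredPartition ΦC ΦA ΦR) (h : Tautology (φ.biimp ψ)) :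
    φ ∈ ΦR ↔ ψ ∈ ΦR := by
  rw [hpart.mem_R_iff, hpart.mem_R_iff, hpart.mem_C_congr h, hpart.mem_A_congr h]

end CredPartition

def FilteredFrom {α : Type} (ΦC ΦA ΦR K : Set (PropForm α))
    (Bs Bo : PropForm α → Set (PropForm α)) : Prop :=
  ∀ φ, (φ ∈ ΦR → Bo φ = K) ∧ (φ ∈ ΦC → Bo φ = Bs φ) ∧ (φ ∈ ΦA → Bo φ = K ∩ Bs φ)

section RevisionOfFiltered

variable {α : Type} {ΦC ΦA ΦR K : Set (PropForm α)} {Bo : PropForm α → Set (PropForm α)}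
  {φ ψ : PropForm α}

open Classical in
noncomputable def revisionOfFiltered (ΦC ΦA K : Set (PropForm α))
    (Bo : PropForm α → Set (PropForm α)) (φ : PropForm α) : Set (PropForm α) :=
  if φ ∈ ΦC then Bo φ
  else if φ ∈ ΦA then Cn (Bo φ ∪ {φ})
  else if φ.neg ∈ K then Cn {φ}
  else Cn (K ∪ {φ})

lemma revisionOfFiltered_of_mem_C (hC : φ ∈ ΦC) : revisionOfFiltered ΦC ΦA K Bo φ = Bo φ := by
  simp [revisionOfFiltered, hC]

lemma revisionOfFiltered_of_mem_A (hpart : CredPartition ΦC ΦA ΦR) (hA : φ ∈ ΦA) :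
    revisionOfFiltered ΦC ΦA K Bo φ = Cn (Bo φ ∪ {φ}) := by
  simp [revisionOfFiltered, hA, hpart.disjCA.notMem_of_mem_right hA]

lemma revisionOfFiltered_of_mem_R (hpart : CredPartition ΦC ΦA ΦR) (hR : φ ∈ ΦR)
    (hn : φ.neg ∈ K) : revisionOfFiltered ΦC ΦA K Bo φ = Cn {φ} := by
  obtain ⟨hC, hA⟩ := hpart.mem_R_iff.mp hR
  simp [revisionOfFiltered, hC, hA, hn]

lemma revisionOfFiltered_of_neg_notMem (h : IsFiltered ΦC ΦA ΦR K Bo) (hn : φ.neg ∉ K) :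
    revisionOfFiltered ΦC ΦA K Bo φ = Cn (K ∪ {φ}) := by
  unfold revisionOfFiltered
  split_ifs with hC hA
  · exact h.f2a φ hn hC
  · rw [h.f2b φ hn hA]
  · rfl

lemma dedClosed_revisionOfFiltered (h : IsFiltered ΦC ΦA ΦR K Bo) (φ : PropForm α) :
    DedClosed (revisionOfFiltered ΦC ΦA K Bo φ) := by
  by_cases hn : φ.neg ∈ K
  · unfold revisionOfFiltered
    split_ifs with hC
    · exact (h.f3 φ hn).2
    all_goals exact dedClosed_Cn
  · rw [revisionOfFiltered_of_neg_notMem h hn]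
    exact dedClosed_Cn

lemma mem_revisionOfFiltered (h : IsFiltered ΦC ΦA ΦR K Bo) (φ : PropForm α) :
    φ ∈ revisionOfFiltered ΦC ΦA K Bo φ := by
  by_cases hn : φ.neg ∈ K
  · unfold revisionOfFiltered
    split_ifs with hC
    · exact h.f3a φ hn hC
    all_goals exact subset_Cn (by simp)
  · rw [revisionOfFiltered_of_neg_notMem h hn]
    exact subset_Cn (Set.mem_union_right K rfl)

lemma revisionOfFiltered_subset (hK : DedClosed K) (h : IsFiltered ΦC ΦA ΦR K Bo) :
    revisionOfFiltered ΦC ΦA K Bo φ ⊆ Cn (K ∪ {φ}) := by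
  by_cases hn : φ.neg ∈ K
  · rw [Cn_union_singleton_eq_univ_iff.mpr (hK ▸ hn)]
    exact Set.subset_univ _
  · rw [revisionOfFiltered_of_neg_notMem h hn]

lemma revisionOfFiltered_eq_univ_iff (hpart : CredPartition ΦC ΦA ΦR) (hK : DedClosed K)
    (h : IsFiltered ΦC ΦA ΦR K Bo) :
    revisionOfFiltered ΦC ΦA K Bo φ = Set.univ ↔ Contradiction φ := by
  constructor
  · intro huniv
    by_cases hn : φ.neg ∈ K
    · rcases hpart.mem_or φ with hC | hA | hR
      · rw [revisionOfFiltered_of_mem_C hC] at huniv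
        exact ((h.f3 φ hn).1.ne_univ huniv).elim
      · rw [revisionOfFiltered_of_mem_A hpart hA, Cn_union_singleton_eq_univ_iff,
          ← (h.f3 φ hn).2] at huniv
        exact (((h.f3b φ hn hA).1 huniv).2 rfl).elim
      · rwa [revisionOfFiltered_of_mem_R hpart hR hn, Cn_singleton_eq_univ_iff] at huniv
    · rw [revisionOfFiltered_of_neg_notMem h hn, Cn_union_singleton_eq_univ_iff, ← hK] at huniv
      exact (hn huniv).elim
  · intro hc
    have hn : φ.neg ∈ K := hK ▸ mem_Cn_of_tautology fun v => by simp [hc v]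
    rw [revisionOfFiltered_of_mem_R hpart (hpart.contra_mem_R φ hc) hn]
    exact Cn_singleton_eq_univ_iff.mpr hc

open Classical in
lemma revisionOfFiltered_congr (hpart : CredPartition ΦC ΦA ΦR) (hK : DedClosed K)
    (h : IsFiltered ΦC ΦA ΦR K Bo) (ht : Tautology (φ.biimp ψ)) :
    revisionOfFiltered ΦC ΦA K Bo φ = revisionOfFiltered ΦC ΦA K Bo ψ := by
  have he := tautology_biimp_iff.mp ht
  have hn : φ.neg ∈ K ↔ ψ.neg ∈ K := hK.mem_congr fun v => by simp [he v]
  have hBo : Cn (Bo φ ∪ {φ}) = Cn (Bo ψ ∪ {ψ}) := by rw [h.f4 φ ψ ht, Cn_union_singleton_congr he]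
  exact if_congr (hpart.mem_C_congr ht) (h.f4 φ ψ ht) <| if_congr (hpart.mem_A_congr ht) hBo <|
    if_congr hn (Cn_singleton_congr he) (Cn_union_singleton_congr he)

lemma isBasicAGM_revisionOfFiltered (hpart : CredPartition ΦC ΦA ΦR) (hK : DedClosed K)
    (h : IsFiltered ΦC ΦA ΦR K Bo) : IsBasicAGM K (revisionOfFiltered ΦC ΦA K Bo) :=
  ⟨dedClosed_revisionOfFiltered h, mem_revisionOfFiltered h,
    fun _ => revisionOfFiltered_subset hK h,
    fun _ hn => (revisionOfFiltered_of_neg_notMem h hn).ge,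
    fun _ => revisionOfFiltered_eq_univ_iff hpart hK h,
    fun _ _ => revisionOfFiltered_congr hpart hK h⟩

lemma filteredFrom_revisionOfFiltered (hpart : CredPartition ΦC ΦA ΦR)
    (h : IsFiltered ΦC ΦA ΦR K Bo) :
    FilteredFrom ΦC ΦA ΦR K (revisionOfFiltered ΦC ΦA K Bo) Bo := by
  refine fun φ => ⟨h.f1 φ, fun hC => (revisionOfFiltered_of_mem_C hC).symm, fun hA => ?_⟩
  rw [revisionOfFiltered_of_mem_A hpart hA]
  by_cases hn : φ.neg ∈ K
  · rw [← (h.f3b φ hn hA).2, Set.inter_comm, Cn_union_singleton_inter_Cn_union_neg,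
      ← (h.f3 φ hn).2]
  · rw [h.f2b φ hn hA, Set.inter_eq_left.mpr (Set.subset_union_left.trans subset_Cn)]

end RevisionOfFiltered

namespace IsBasicAGM

variable {α : Type} {K : Set (PropForm α)} {Bs : PropForm α → Set (PropForm α)} {φ : PropForm α}

lemma eq_Cn_union_of_neg_notMem (hB : IsBasicAGM K Bs) (hn : φ.neg ∉ K) :
    Bs φ = Cn (K ∪ {φ}) :=
  (hB.agm3 φ).antisymm (hB.agm4 φ hn)

lemma consistentSet (hB : IsBasicAGM K Bs) (hc : ¬ Contradiction φ) : ConsistentSet (Bs φ) :=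
  fun h => hc ((hB.agm5 φ).mp ((hB.agm1 φ).trans h))

lemma neg_notMem (hB : IsBasicAGM K Bs) (hc : ¬ Contradiction φ) : φ.neg ∉ Bs φ :=
  fun hn => hB.consistentSet hc
    (Cn_eq_univ_of_mem_of_neg_mem (subset_Cn (hB.agm2 φ)) (subset_Cn hn))

end IsBasicAGM

lemma isFiltered_of_filteredFrom {α : Type} {ΦC ΦA ΦR K : Set (PropForm α)}
    {Bs Bo : PropForm α → Set (PropForm α)} (hpart : CredPartition ΦC ΦA ΦR)
    (hKcons : ConsistentSet K) (hKded : DedClosed K) (hB : IsBasicAGM K Bs)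
    (hrep : FilteredFrom ΦC ΦA ΦR K Bs Bo) : IsFiltered ΦC ΦA ΦR K Bo where
  f1 φ hR := (hrep φ).1 hR
  f2a φ hn hC := ((hrep φ).2.1 hC).trans (hB.eq_Cn_union_of_neg_notMem hn)
  f2b φ hn hA := ((hrep φ).2.2 hA).trans <| Set.inter_eq_left.mpr <|
    (Set.subset_union_left.trans subset_Cn).trans (hB.agm4 φ hn)
  f3 φ _ := by
    rcases hpart.mem_or φ with hC | hA | hR
    · rw [(hrep φ).2.1 hC]
      exact ⟨hB.consistentSet (hpart.C_consistent φ hC), hB.agm1 φ⟩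
    · rw [(hrep φ).2.2 hA]
      exact ⟨hKcons.anti Set.inter_subset_left, hKded.inter (hB.agm1 φ)⟩
    · rw [(hrep φ).1 hR]
      exact ⟨hKcons, hKded⟩
  f3a φ _ hC := (hrep φ).2.1 hC ▸ hB.agm2 φ
  f3b φ hn hA := by
    rw [(hrep φ).2.2 hA]
    refine ⟨fun x hx => ⟨hx.1, ?_⟩, Cn_inter_union_neg_eq hKded (hB.agm1 φ) (hB.agm2 φ) hn⟩
    rintro rfl
    exact hB.neg_notMem (hpart.A_consistent φ hA) hx.2
  f4 φ ψ ht := by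
    rcases hpart.mem_or φ with hC | hA | hR
    · rw [(hrep φ).2.1 hC, (hrep ψ).2.1 ((hpart.mem_C_congr ht).mp hC), hB.agm6 φ ψ ht]
    · rw [(hrep φ).2.2 hA, (hrep ψ).2.2 ((hpart.mem_A_congr ht).mp hA), hB.agm6 φ ψ ht]
    · rw [(hrep φ).1 hR, (hrep ψ).1 ((hpart.mem_R_congr ht).mp hR)]

theorem filtered_iff_basicAGM_representation_general {α : Type}
    (ΦC ΦA ΦR K : Set (PropForm α)) (hpart : CredPartition ΦC ΦA ΦR)
    (hKcons : ConsistentSet K) (hKded : DedClosed K)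
    (Bo : PropForm α → Set (PropForm α)) :
    IsFiltered ΦC ΦA ΦR K Bo ↔
      ∃ Bs : PropForm α → Set (PropForm α), IsBasicAGM K Bs ∧
        ∀ φ : PropForm α,
          (φ ∈ ΦR → Bo φ = K) ∧
          (φ ∈ ΦC → Bo φ = Bs φ) ∧
          (φ ∈ ΦA → Bo φ = K ∩ Bs φ) :=
  ⟨fun h => ⟨_, isBasicAGM_revisionOfFiltered hpart hKded h,
      filteredFrom_revisionOfFiltered hpart h⟩,
    fun ⟨_, hB, hrep⟩ => isFiltered_of_filteredFrom hpart hKcons hKded hB hrep⟩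

/-- Proposition 1: B° is a filtered belief revision function iff it is obtained
from some basic AGM belief revision function by filtering through the credibility partition. -/
theorem filtered_iff_basicAGM_representation {α : Type} [Countable α] [Nonempty α]
    (ΦC ΦA ΦR K : Set (PropForm α)) (hpart : CredPartition ΦC ΦA ΦR)
    (hKcons : ConsistentSet K) (hKded : DedClosed K)
    (Bo : PropForm α → Set (PropForm α)) :
    IsFiltered ΦC ΦA ΦR K Bo ↔
      ∃ Bs : PropForm α → Set (PropForm α), IsBasicAGM K Bs ∧
        ∀ φ : PropForm α,
          (φ ∈ ΦR → Bo φ = K) ∧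
          (φ ∈ ΦC → Bo φ = Bs φ) ∧
          (φ ∈ ΦA → Bo φ = K ∩ Bs φ) :=
  filtered_iff_basicAGM_representation_general ΦC ΦA ΦR K hpart hKcons hKded Bo
end

section
/- Let C = ⟨Ω, {E_C, E_A, E_R}, f⟩ be a generalized choice structure satisfying: for every E ∈ E (where E = E_C ∪ E_A ∪ E_R), (1) if E ∩ f(Ω) ≠ ∅ then (a) if E ∈ E_C then f(E) = E ∩ f(Ω) and (b) if E ∈ E_A then f(E) = f(Ω), and (2) if E ∩ f(Ω) = ∅ and E ∈ E_A then f(E) = f(Ω) ∪ E′ for some nonempty E′ ⊆ E. Then C is basic-AGM consistent, i.e., for every model of C, the associated partial belief revision function B_{K,Ψ} can be extended to a full-domain function B°_K : Φ → 2^Φ that is representable via some basic AGM belief revision function B*_K as: B°_K(φ) = K if φ ∈ Φ_R, B°_K(φ) = B*_K(φ) if φ ∈ Φ_C, and B°_K(φ) = K ∩ B*_K(φ) if φ ∈ Φ_A. -/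
open PropForm

/-! Generalized choice structures and their models. -/

/-- A generalized choice structure ⟨Ω, {EC, EA, ER}, f⟩. The function `f` is total on `Set Ω`
but is only constrained on the events in `EC ∪ EA ∪ ER`. -/
structure GCS (Ω : Type) : Type where
  EC : Set (Set Ω)
  EA : Set (Set Ω)
  ER : Set (Set Ω)
  f : Set Ω → Set Ω
  omega_nonempty : Nonempty Ω
  disjCA : Disjoint EC EA
  disjCR : Disjoint EC ER
  disjAR : Disjoint EA ER
  univ_mem_C : (Set.univ : Set Ω) ∈ EC
  empty_mem_R : (∅ : Set Ω) ∈ ER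
  f_univ_nonempty : (f Set.univ).Nonempty
  f_R : ∀ E ∈ ER, f E = f Set.univ
  f_C : ∀ E ∈ EC, (f E).Nonempty ∧ f E ⊆ E
  f_A : ∀ E ∈ EA, (f E ∩ E).Nonempty

/-- The collection of all events (possible items of information) of a GCS. -/
def GCS.events {Ω : Type} (C : GCS Ω) : Set (Set Ω) := C.EC ∪ C.EA ∪ C.ER

/-- The truth set ||φ|| ⊆ Ω of a formula, given a valuation V : A → 2^Ω. -/
def truthSet {Ω α : Type} (V : α → Set Ω) : PropForm α → Set Ω
  | .atom p => V p
  | .neg φ => (truthSet V φ)ᶜ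
  | .or φ ψ => truthSet V φ ∪ truthSet V ψ

/-- A model (interpretation) of a GCS: a credibility partition together with a valuation
such that events in EC (resp. EA, ER) are truth sets only of credible (resp. allowable,
rejected) formulas. -/
structure IsGCSModel {Ω α : Type} (C : GCS Ω) (ΦC ΦA ΦR : Set (PropForm α))
    (V : α → Set Ω) : Prop where
  credPartition : CredPartition ΦC ΦA ΦR
  memC : ∀ φ : PropForm α, truthSet V φ ∈ C.EC → φ ∈ ΦC
  memA : ∀ φ : PropForm α, truthSet V φ ∈ C.EA → φ ∈ ΦA
  memR : ∀ φ : PropForm α, truthSet V φ ∈ C.ER → φ ∈ ΦR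

/-- The initial belief set K = {φ : f(Ω) ⊆ ||φ||} determined by a GCS and a valuation. -/
def gcsK {Ω α : Type} (C : GCS Ω) (V : α → Set Ω) : Set (PropForm α) :=
  {φ | C.f Set.univ ⊆ truthSet V φ}

/-- The set Ψ = {φ : ||φ|| ∈ E} of formulas that are potential items of information. -/
def gcsPsi {Ω α : Type} (C : GCS Ω) (V : α → Set Ω) : Set (PropForm α) :=
  {φ | truthSet V φ ∈ C.events}

/-- The partial belief revision function B_{K,Ψ}(φ) = {ψ : f(||φ||) ⊆ ||ψ||} (to be used
only on formulas in Ψ). -/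
def gcsB {Ω α : Type} (C : GCS Ω) (V : α → Set Ω) (φ : PropForm α) : Set (PropForm α) :=
  {ψ | C.f (truthSet V φ) ⊆ truthSet V ψ}

/-- Basic-AGM consistency of a GCS (relative to the propositional language over atoms α):
for every model there is a full-domain extension Bo of the partial belief revision function
and a basic AGM belief revision function Bs based on K such that Bo is obtained from Bs by
filtering through the credibility partition. -/
def BasicAGMConsistent (α : Type) {Ω : Type} (C : GCS Ω) : Prop :=
  ∀ (ΦC ΦA ΦR : Set (PropForm α)) (V : α → Set Ω),
    IsGCSModel C ΦC ΦA ΦR V →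
      ∃ Bo Bs : PropForm α → Set (PropForm α),
        (∀ φ ∈ gcsPsi C V, Bo φ = gcsB C V φ) ∧
        IsBasicAGM (gcsK C V) Bs ∧
        ∀ φ : PropForm α,
          (φ ∈ ΦR → Bo φ = gcsK C V) ∧
          (φ ∈ ΦC → Bo φ = Bs φ) ∧
          (φ ∈ ΦA → Bo φ = gcsK C V ∩ Bs φ)

/-- Condition (B) of Proposition 2: the semantic characterization of basic-AGM consistency. -/
def GCSCondB {Ω : Type} (C : GCS Ω) : Prop :=
  ∀ E ∈ C.events,
    ((E ∩ C.f Set.univ).Nonempty →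
      (E ∈ C.EC → C.f E = E ∩ C.f Set.univ) ∧
      (E ∈ C.EA → C.f E = C.f Set.univ)) ∧
    (E ∩ C.f Set.univ = ∅ → E ∈ C.EA →
      ∃ E' : Set Ω, E'.Nonempty ∧ E' ⊆ E ∧ C.f E = C.f Set.univ ∪ E')

/-! Both `K` and the revision are theories of sets of valuations. If `M` is a set of
valuations and each `φ` is assigned a set of its models that depends only on the models of `φ`,
is nonempty when `φ` is consistent and equals `M ∩ Mod φ` whenever that is nonempty, then the
theories of these sets form a basic AGM revision of the theory of `M`. In a model of a GCS, `K`
is the theory of the valuations realised in `f(Ω)`; revising by `φ` selects the valuations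
realised in `f(Ω) ∩ ||φ||` when this is nonempty and otherwise, for an event `||φ||`, those
realised in `f(||φ||) ∩ ||φ||`. Condition (B) is exactly what makes the filtered revision agree
with `f` on events: an allowable event `E` missing `f(Ω)` has `f(Ω) ∪ (f(E) ∩ E) = f(E)`. -/

open Set

namespace PropForm

variable {α : Type}

def models (φ : PropForm α) : Set (α → Bool) := {v | eval v φ = true}

def theoryOf (M : Set (α → Bool)) : Set (PropForm α) := {ψ | M ⊆ ψ.models}

theorem models_neg (φ : PropForm α) : φ.neg.models = φ.modelsᶜ := by
  ext v; simp [models, eval]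

theorem models_or (φ ψ : PropForm α) : (φ.or ψ).models = φ.models ∪ ψ.models := by
  ext v; simp [models, eval]

theorem models_eq_empty_iff {φ : PropForm α} : φ.models = ∅ ↔ Contradiction φ := by
  simp [eq_empty_iff_forall_notMem, models, Contradiction]

theorem models_eq_of_tautology_biimp {φ ψ : PropForm α} (h : Tautology (φ.biimp ψ)) :
    φ.models = ψ.models := by
  ext v
  have := h v
  simp only [biimp, PropForm.and, imp, eval] at this
  cases hφ : eval v φ <;> cases hψ : eval v ψ <;> simp_all [models]

theorem contradiction_and_neg (φ : PropForm α) : Contradiction (φ.and φ.neg) := by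
  intro v; cases h : eval v φ <;> simp [PropForm.and, eval, h]

theorem eval_of_eval_foldr_imp {v : α → Bool} {l : List (PropForm α)} {ψ : PropForm α}
    (h : eval v (l.foldr imp ψ) = true) (hl : ∀ φ ∈ l, eval v φ = true) : eval v ψ = true := by
  induction l with
  | nil => exact h
  | cons φ l ih =>
    simp only [List.foldr, imp, eval, hl φ List.mem_cons_self, Bool.not_true,
      Bool.false_or] at h
    exact ih h fun χ hχ => hl χ (List.mem_cons_of_mem φ hχ)

theorem subset_Cn (F : Set (PropForm α)) : F ⊆ Cn F := by
  intro ψ hψ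
  refine ⟨[ψ], by simpa using hψ, fun v => ?_⟩
  simp only [List.foldr, imp, eval]
  cases eval v ψ <;> rfl

theorem theoryOf_empty : theoryOf (∅ : Set (α → Bool)) = univ := by
  simp [theoryOf]

theorem theoryOf_union (M N : Set (α → Bool)) :
    theoryOf (M ∪ N) = theoryOf M ∩ theoryOf N := by
  ext ψ; exact union_subset_iff

theorem neg_mem_theoryOf_iff {M : Set (α → Bool)} {φ : PropForm α} :
    φ.neg ∈ theoryOf M ↔ M ∩ φ.models = ∅ := by
  change M ⊆ φ.neg.models ↔ _
  rw [models_neg, subset_compl_iff_disjoint_right, disjoint_iff_inter_eq_empty]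

theorem eq_empty_of_mem_theoryOf {M : Set (α → Bool)} {χ : PropForm α} (hχ : Contradiction χ)
    (h : χ ∈ theoryOf M) : M = ∅ :=
  subset_empty_iff.mp (models_eq_empty_iff.mpr hχ ▸ h)

theorem Cn_theoryOf_union_singleton (M : Set (α → Bool)) (φ : PropForm α) :
    Cn (theoryOf M ∪ {φ}) = theoryOf (M ∩ φ.models) := by
  ext ψ
  constructor
  · rintro ⟨l, hl, ht⟩ v ⟨hvM, hvφ⟩
    refine eval_of_eval_foldr_imp (ht v) fun χ hχ => ?_
    rcases hl χ hχ with hχM | rfl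
    exacts [hχM hvM, hvφ]
  · intro hψ
    -- `φ → ψ` holds throughout `M`, and `(φ → ψ) → φ → ψ` is a tautology
    refine ⟨[φ.imp ψ, φ], ?_, fun v => ?_⟩
    · simp only [List.mem_cons, List.not_mem_nil, or_false, forall_eq_or_imp, forall_eq]
      refine ⟨Or.inl fun v hv => ?_, Or.inr rfl⟩
      cases hφ : eval v φ
      · simp [models, imp, eval, hφ]
      · simpa [models, imp, eval, hφ] using hψ ⟨hv, hφ⟩
    · simp only [List.foldr, imp, eval]
      cases eval v φ <;> cases eval v ψ <;> rfl

theorem Cn_theoryOf (M : Set (α → Bool)) : Cn (theoryOf M) = theoryOf M := by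
  refine (subset_Cn _).antisymm' ?_
  rintro ψ ⟨l, hl, ht⟩ v hv
  exact eval_of_eval_foldr_imp (ht v) fun φ hφ => hl φ hφ hv

theorem isBasicAGM_theoryOf (M : Set (α → Bool)) (S : PropForm α → Set (α → Bool))
    (hS_models : ∀ φ, S φ ⊆ φ.models)
    (hS_nonempty : ∀ φ, ¬ Contradiction φ → (S φ).Nonempty)
    (hS_inter : ∀ φ, (M ∩ φ.models).Nonempty → S φ = M ∩ φ.models)
    (hS_congr : ∀ φ ψ, φ.models = ψ.models → S φ = S ψ) :
    IsBasicAGM (theoryOf M) fun φ => theoryOf (S φ) where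
  agm1 φ := (Cn_theoryOf _).symm
  agm2 φ := hS_models φ
  agm3 φ := by
    rw [Cn_theoryOf_union_singleton]
    rcases (M ∩ φ.models).eq_empty_or_nonempty with h | h
    · rw [h, theoryOf_empty]; exact subset_univ _
    · rw [hS_inter φ h]
  agm4 φ hφ := by
    rw [Cn_theoryOf_union_singleton, hS_inter φ]
    exact nonempty_iff_ne_empty.mpr (mt neg_mem_theoryOf_iff.mpr hφ)
  agm5 φ := by
    refine ⟨fun h => by_contra fun hφ => ?_, fun h => ?_⟩
    · have := eq_empty_of_mem_theoryOf (contradiction_and_neg φ) (h ▸ mem_univ _)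
      exact (hS_nonempty φ hφ).ne_empty this
    · have : S φ ⊆ ∅ := models_eq_empty_iff.mpr h ▸ hS_models φ
      rw [subset_empty_iff.mp this, theoryOf_empty]
  agm6 φ ψ h := by rw [hS_congr φ ψ (models_eq_of_tautology_biimp h)]

end PropForm

open PropForm

section StateValuation

variable {Ω α : Type}

open Classical in
noncomputable def stateValuation (V : α → Set Ω) (ω : Ω) : α → Bool := fun a => decide (ω ∈ V a)

theorem preimage_stateValuation_models (V : α → Set Ω) (φ : PropForm α) :
    stateValuation V ⁻¹' φ.models = truthSet V φ := by
  induction φ with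
  | atom a => ext ω; simp [models, eval, stateValuation, truthSet]
  | neg φ ih => rw [models_neg, preimage_compl, ih, truthSet]
  | or φ ψ ihφ ihψ => rw [models_or, preimage_union, ihφ, ihψ, truthSet]

theorem image_stateValuation_inter_truthSet (V : α → Set Ω) (S : Set Ω) (φ : PropForm α) :
    stateValuation V '' (S ∩ truthSet V φ) = stateValuation V '' S ∩ φ.models := by
  rw [← preimage_stateValuation_models, image_inter_preimage]

theorem setOf_subset_truthSet_eq_theoryOf (V : α → Set Ω) (S : Set Ω) :
    {ψ : PropForm α | S ⊆ truthSet V ψ} = theoryOf (stateValuation V '' S) := by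
  ext ψ
  change S ⊆ truthSet V ψ ↔ stateValuation V '' S ⊆ ψ.models
  rw [image_subset_iff, preimage_stateValuation_models]

theorem truthSet_eq_of_models_eq (V : α → Set Ω) {φ ψ : PropForm α}
    (h : φ.models = ψ.models) : truthSet V φ = truthSet V ψ := by
  rw [← preimage_stateValuation_models, h, preimage_stateValuation_models]

end StateValuation

namespace GCS

variable {Ω α : Type} (C : GCS Ω)

theorem f_inter_nonempty {E : Set Ω} (hE : E ∈ C.EC ∪ C.EA) : (C.f E ∩ E).Nonempty := by
  rcases hE with hE | hE
  · rw [inter_eq_left.mpr (C.f_C E hE).2]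
    exact (C.f_C E hE).1
  · exact C.f_A E hE

theorem f_univ_union_f_inter_of_mem_EA (hB : GCSCondB C) {E : Set Ω} (hE : E ∈ C.EA)
    (h : ¬ (C.f univ ∩ E).Nonempty) : C.f univ ∪ (C.f E ∩ E) = C.f E := by
  have hdisj : E ∩ C.f univ = ∅ := by rwa [inter_comm, ← not_nonempty_iff_eq_empty]
  obtain ⟨E', -, hE'E, hfE⟩ := ((hB E (Or.inl (Or.inr hE))).2 hdisj hE)
  rw [hfE, union_inter_distrib_right, inter_comm (C.f univ), hdisj, empty_union,
    inter_eq_left.mpr hE'E]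

variable (V : α → Set Ω)

open Classical in
/-- For a contradiction `φ` this is empty: `||φ|| = ∅ ∈ E_R`, so the last branch is taken. -/
noncomputable def selection (φ : PropForm α) : Set (α → Bool) :=
  if (C.f univ ∩ truthSet V φ).Nonempty then stateValuation V '' (C.f univ ∩ truthSet V φ)
  else if truthSet V φ ∈ C.EC ∪ C.EA then
    stateValuation V '' (C.f (truthSet V φ) ∩ truthSet V φ)
  else φ.models

theorem gcsK_eq_theoryOf : gcsK C V = theoryOf (stateValuation V '' C.f univ) :=
  setOf_subset_truthSet_eq_theoryOf V _

theorem gcsB_eq_theoryOf (φ : PropForm α) :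
    gcsB C V φ = theoryOf (stateValuation V '' C.f (truthSet V φ)) :=
  setOf_subset_truthSet_eq_theoryOf V _

theorem selection_subset_models (φ : PropForm α) : C.selection V φ ⊆ φ.models := by
  rw [selection]
  split_ifs
  · exact image_subset_iff.mpr (preimage_stateValuation_models V φ ▸ inter_subset_right)
  · exact image_subset_iff.mpr (preimage_stateValuation_models V φ ▸ inter_subset_right)
  · exact subset_rfl

theorem selection_nonempty {φ : PropForm α} (hφ : ¬ Contradiction φ) :
    (C.selection V φ).Nonempty := by
  rw [selection]
  split_ifs with h₁ h₂
  · exact h₁.image _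
  · exact (C.f_inter_nonempty h₂).image _
  · exact nonempty_iff_ne_empty.mpr (mt models_eq_empty_iff.mp hφ)

theorem selection_of_inter_models_nonempty {φ : PropForm α}
    (h : (stateValuation V '' C.f univ ∩ φ.models).Nonempty) :
    C.selection V φ = stateValuation V '' C.f univ ∩ φ.models := by
  rw [← image_stateValuation_inter_truthSet] at h ⊢
  rw [selection, if_pos (image_nonempty.mp h)]

theorem selection_congr {φ ψ : PropForm α} (h : φ.models = ψ.models) :
    C.selection V φ = C.selection V ψ := by
  rw [selection, selection, truthSet_eq_of_models_eq V h, h]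

theorem isBasicAGM_selection : IsBasicAGM (gcsK C V) fun φ => theoryOf (C.selection V φ) := by
  rw [gcsK_eq_theoryOf]
  exact isBasicAGM_theoryOf _ _ (C.selection_subset_models V)
    (fun _ => C.selection_nonempty V) (fun _ => C.selection_of_inter_models_nonempty V)
    (fun _ _ => C.selection_congr V)

theorem selection_of_mem_EC (hB : GCSCondB C) {φ : PropForm α} (hE : truthSet V φ ∈ C.EC) :
    C.selection V φ = stateValuation V '' C.f (truthSet V φ) := by
  by_cases h : (C.f univ ∩ truthSet V φ).Nonempty
  · rw [selection, if_pos h, ((hB _ (Or.inl (Or.inl hE))).1 (inter_comm _ _ ▸ h)).1 hE,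
      inter_comm]
  · rw [selection, if_neg h, if_pos (mem_union_left _ hE), inter_eq_left.mpr (C.f_C _ hE).2]

theorem image_f_univ_union_selection_of_mem_EA (hB : GCSCondB C) {φ : PropForm α}
    (hE : truthSet V φ ∈ C.EA) :
    stateValuation V '' C.f univ ∪ C.selection V φ =
      stateValuation V '' C.f (truthSet V φ) := by
  by_cases h : (C.f univ ∩ truthSet V φ).Nonempty
  · rw [selection, if_pos h, ((hB _ (Or.inl (Or.inr hE))).1 (inter_comm _ _ ▸ h)).2 hE,
      union_eq_left.mpr (image_mono inter_subset_left)]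
  · rw [selection, if_neg h, if_pos (mem_union_right _ hE), ← image_union,
      C.f_univ_union_f_inter_of_mem_EA hB hE h]

theorem gcsB_eq_gcsK_of_mem_ER {φ : PropForm α} (hE : truthSet V φ ∈ C.ER) :
    gcsB C V φ = gcsK C V := by
  rw [gcsB, gcsK, C.f_R _ hE]

end GCS

section Filtering

variable {α : Type} {ΦC ΦA ΦR K : Set (PropForm α)} {B : PropForm α → Set (PropForm α)}
  {φ : PropForm α}

open Classical in
noncomputable def filteredRevision (ΦC ΦR K : Set (PropForm α))
    (B : PropForm α → Set (PropForm α)) (φ : PropForm α) : Set (PropForm α) :=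
  if φ ∈ ΦR then K else if φ ∈ ΦC then B φ else K ∩ B φ

theorem filteredRevision_of_mem_R (hφ : φ ∈ ΦR) : filteredRevision ΦC ΦR K B φ = K :=
  if_pos hφ

theorem filteredRevision_of_mem_C (hP : CredPartition ΦC ΦA ΦR) (hφ : φ ∈ ΦC) :
    filteredRevision ΦC ΦR K B φ = B φ := by
  rw [filteredRevision, if_neg (disjoint_left.mp hP.disjCR hφ), if_pos hφ]

theorem filteredRevision_of_mem_A (hP : CredPartition ΦC ΦA ΦR) (hφ : φ ∈ ΦA) :
    filteredRevision ΦC ΦR K B φ = K ∩ B φ := by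
  rw [filteredRevision, if_neg (disjoint_left.mp hP.disjAR hφ),
    if_neg (disjoint_right.mp hP.disjCA hφ)]

end Filtering

theorem gcs_condB_to_basicAGMConsistent_general {Ω α : Type}
    (C : GCS Ω) (hB : GCSCondB C) :
    BasicAGMConsistent α C := by
  intro ΦC ΦA ΦR V hM
  have hP := hM.credPartition
  let Bs φ := theoryOf (C.selection V φ)
  refine ⟨filteredRevision ΦC ΦR (gcsK C V) Bs, Bs, ?_, C.isBasicAGM_selection V, fun φ =>
    ⟨filteredRevision_of_mem_R, filteredRevision_of_mem_C hP, filteredRevision_of_mem_A hP⟩⟩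
  rintro φ ((hE | hE) | hE)
  · rw [filteredRevision_of_mem_C hP (hM.memC φ hE), C.gcsB_eq_theoryOf,
      ← C.selection_of_mem_EC V hB hE]
  · rw [filteredRevision_of_mem_A hP (hM.memA φ hE), C.gcsB_eq_theoryOf, C.gcsK_eq_theoryOf,
      ← C.image_f_univ_union_selection_of_mem_EA V hB hE, theoryOf_union]
  · rw [filteredRevision_of_mem_R (hM.memR φ hE), C.gcsB_eq_gcsK_of_mem_ER V hE]

/-- Proposition 2, (B) ⇒ (A): a generalized choice structure satisfying the
semantic conditions (B) is basic-AGM consistent. -/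
theorem gcs_condB_to_basicAGMConsistent {Ω α : Type} [Countable α] [Nonempty α]
    (C : GCS Ω) (hB : GCSCondB C) :
    BasicAGMConsistent α C :=
  gcs_condB_to_basicAGMConsistent_general C hB
end
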